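/- (Relaxed Lorenz's condition) Let A be an n×n real matrix whose negative off-diagonal part admits a decomposition A_a⁻ = A^z + A^s with A^z ≤ 0 and A^s ≤ 0 entrywise, and suppose there exists a diagonal matrix A_{d*} with A_{d*} ≥ A_d entrywise such that: (1) A_{d*} + A^z is a nonsingular M-matrix (in particular the diagonal entries of A_{d*} are positive, so A_{d*} is invertible); (2) A_a⁺ ≤ A^z A_{d*}⁻¹ A^s entrywise; (3) there exists a nonzero vector e ≥ 0 with Ae ≥ 0 such that A^z or A^s connects N⁰(Ae) with N⁺(Ae). Then A is a product of two nonsingular M-matrices; in particular A is invertible and A⁻¹ ≥ 0 entrywise. -/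

import Mathlib

/-!
Put `D = A_{d*}` and `B = D + A^z`. Expanding, `B D⁻¹ (D + A^s) = D + A^z + A^s + A^z D⁻¹ A^s`,
which dominates `A = A_d + A_a⁺ + A^z + A^s` entrywise by (2). As `B⁻¹ ≥ 0`, the second factor
`M = B⁻¹ A` is therefore bounded by `D⁻¹ (D + A^s)`, so off the diagonal `M ≤ D⁻¹ A^s ≤ 0`,
strictly wherever `A^s ≠ 0`. The vector `M e = B⁻¹ (A e) ≥ 0` vanishes only where `A e` does, and
vanishes nowhere if `A^z` connects `N⁰(Ae)` with `N⁺(Ae)`; either way `M` connects `N⁰(Me)` with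
`N⁺(Me)`, and a Z-matrix with such a vector is a nonsingular M-matrix by a maximum principle.
-/

open Matrix

/-- A real square matrix is a nonsingular M-matrix if its off-diagonal entries are
nonpositive, it is invertible, and all entries of its inverse are nonnegative. -/
def IsNonsingMMatrix {n : ℕ} (M : Matrix (Fin n) (Fin n) ℝ) : Prop :=
  (∀ i j, i ≠ j → M i j ≤ 0) ∧ IsUnit M.det ∧ ∀ i j, 0 ≤ M⁻¹ i j

/-- `A` connects `N1` with `N2`: from every index in `N1` there is a path of
nonzero entries of `A` of length `r ≥ 1` ending in `N2`. -/
def Connects {n : ℕ} (A : Matrix (Fin n) (Fin n) ℝ) (N1 N2 : Set (Fin n)) : Prop :=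
  ∀ i0 ∈ N1, ∃ r : ℕ, 1 ≤ r ∧ ∃ path : ℕ → Fin n, path 0 = i0 ∧ path r ∈ N2 ∧
    ∀ k, 1 ≤ k → k ≤ r → A (path (k - 1)) (path k) ≠ 0

/-- `N⁰(v)`, the set of indices where `v` vanishes. -/
def Nzero {n : ℕ} (v : Fin n → ℝ) : Set (Fin n) := {i | v i = 0}

/-- `N⁺(v)`, the set of indices where `v` is positive. -/
def Npos {n : ℕ} (v : Fin n → ℝ) : Set (Fin n) := {i | 0 < v i}

/-- Diagonal part `A_d` of a matrix. -/
noncomputable def diagPart {n : ℕ} (A : Matrix (Fin n) (Fin n) ℝ) : Matrix (Fin n) (Fin n) ℝ :=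
  Matrix.diagonal fun i => A i i

/-- Positive off-diagonal part `A_a⁺` of a matrix. -/
noncomputable def offDiagPos {n : ℕ} (A : Matrix (Fin n) (Fin n) ℝ) : Matrix (Fin n) (Fin n) ℝ :=
  Matrix.of fun i j => if i ≠ j ∧ 0 < A i j then A i j else 0

/-- Negative off-diagonal part `A_a⁻ = A - A_d - A_a⁺` of a matrix. -/
noncomputable def offDiagNeg {n : ℕ} (A : Matrix (Fin n) (Fin n) ℝ) : Matrix (Fin n) (Fin n) ℝ :=
  (A - diagPart A) - offDiagPos A


open Finset

def IsZMatrix {ι : Type*} (M : Matrix ι ι ℝ) : Prop :=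
  ∀ i j, i ≠ j → M i j ≤ 0

lemma diagonal_add_apply_ne_zero {ι : Type*} [DecidableEq ι] {d : ι → ℝ} {Z : Matrix ι ι ℝ}
    (hZ : ∀ i, Z i i = 0) {i j : ι} (h : Z i j ≠ 0) : (diagonal d + Z) i j ≠ 0 := by
  have hij : i ≠ j := by rintro rfl; exact h (hZ i)
  rwa [Matrix.add_apply, diagonal_apply_ne _ hij, zero_add]

section

variable {ι : Type*} [Fintype ι]

lemma inv_diagonal_of_ne_zero [DecidableEq ι] {d : ι → ℝ} (hd : ∀ i, d i ≠ 0) :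
    (diagonal d)⁻¹ = diagonal d⁻¹ :=
  inv_eq_right_inv (by rw [diagonal_mul_diagonal, ← diagonal_one]; simp [hd])

lemma mul_apply_nonneg {P Q : Matrix ι ι ℝ} (hP : ∀ i j, 0 ≤ P i j) (hQ : ∀ i j, 0 ≤ Q i j)
    (i j : ι) : 0 ≤ (P * Q) i j :=
  sum_nonneg fun k _ => mul_nonneg (hP i k) (hQ k j)

lemma mul_apply_le_mul_apply {P X Y : Matrix ι ι ℝ} (hP : ∀ i j, 0 ≤ P i j)
    (hXY : ∀ i j, X i j ≤ Y i j) (i j : ι) : (P * X) i j ≤ (P * Y) i j :=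
  sum_le_sum fun k _ => mul_le_mul_of_nonneg_left (hXY k j) (hP i k)

lemma mulVec_apply_nonneg {P : Matrix ι ι ℝ} (hP : ∀ i j, 0 ≤ P i j) {x : ι → ℝ}
    (hx : ∀ i, 0 ≤ x i) (i : ι) : 0 ≤ (P *ᵥ x) i :=
  sum_nonneg fun k _ => mul_nonneg (hP i k) (hx k)

lemma mulVec_nonsing_inv_mulVec [DecidableEq ι] {M : Matrix ι ι ℝ} (hM : IsUnit M.det)
    (u : ι → ℝ) : M *ᵥ (M⁻¹ *ᵥ u) = u := by
  rw [mulVec_mulVec, mul_nonsing_inv M hM, one_mulVec]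

lemma inv_mul_apply_le_of_le_mul [DecidableEq ι] {B A P : Matrix ι ι ℝ} (hB : IsUnit B.det)
    (hBinv : ∀ i j, 0 ≤ B⁻¹ i j) (hle : ∀ i j, A i j ≤ (B * P) i j) (i j : ι) :
    (B⁻¹ * A) i j ≤ P i j := by
  simpa [← Matrix.mul_assoc, nonsing_inv_mul B hB] using mul_apply_le_mul_apply hBinv hle i j

end

lemma IsZMatrix.mulVec_apply_eq_zero_of_apply_eq_zero {ι : Type*} [Fintype ι]
    {M : Matrix ι ι ℝ} (hM : IsZMatrix M) {z : ι → ℝ} (hz : ∀ j, 0 ≤ z j) {i : ι}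
    (hMz : 0 ≤ (M *ᵥ z) i) (hzi : z i = 0) :
    (M *ᵥ z) i = 0 ∧ ∀ j, M i j ≠ 0 → z j = 0 := by
  have hterm : ∀ j ∈ univ, M i j * z j ≤ 0 := by
    intro j _
    rcases eq_or_ne i j with rfl | hij
    · simp [hzi]
    · exact mul_nonpos_of_nonpos_of_nonneg (hM i j hij) (hz j)
  have hsum : (M *ᵥ z) i = 0 := le_antisymm (sum_nonpos hterm) hMz
  refine ⟨hsum, fun j hMij => ?_⟩
  have := (sum_eq_zero_iff_of_nonpos hterm).mp hsum j (mem_univ j)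
  exact (mul_eq_zero.mp this).resolve_left hMij

variable {n : ℕ}

lemma Connects.mono {A B : Matrix (Fin n) (Fin n) ℝ} {N₁ N₂ N₁' N₂' : Set (Fin n)}
    (h : Connects A N₁ N₂) (hAB : ∀ i j, A i j ≠ 0 → B i j ≠ 0) (h₁ : N₁' ⊆ N₁)
    (h₂ : N₂ ⊆ N₂') : Connects B N₁' N₂' := by
  intro i hi
  obtain ⟨r, hr, p, hp0, hpr, hp⟩ := h i (h₁ hi)
  exact ⟨r, hr, p, hp0, h₂ hpr, fun k hk hkr => hAB _ _ (hp k hk hkr)⟩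

lemma Connects.eq_empty_of_subset_nzero {M : Matrix (Fin n) (Fin n) ℝ} {w : Fin n → ℝ}
    (hc : Connects M (Nzero w) (Npos w)) {S : Set (Fin n)} (hS : S ⊆ Nzero w)
    (hclosed : ∀ i ∈ S, ∀ j, M i j ≠ 0 → j ∈ S) : S = ∅ := by
  refine Set.eq_empty_iff_forall_notMem.mpr fun i hi => ?_
  obtain ⟨r, -, p, hp0, hpr, hp⟩ := hc i (hS hi)
  have hpath : ∀ k ≤ r, p k ∈ S := by
    intro k
    induction k with
    | zero => intro _; rwa [hp0]
    | succ k ih =>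
      intro hk
      exact hclosed _ (ih (by omega)) _ (by simpa using hp (k + 1) (by omega) hk)
  have hzero : w (p r) = 0 := hS (hpath r le_rfl)
  exact (ne_of_gt hpr) hzero

section ZMatrix

variable {M : Matrix (Fin n) (Fin n) ℝ} {v : Fin n → ℝ}

lemma IsZMatrix.pos_of_connects (hM : IsZMatrix M) (hv : ∀ i, 0 ≤ v i)
    (hMv : ∀ i, 0 ≤ (M *ᵥ v) i) (hc : Connects M (Nzero (M *ᵥ v)) (Npos (M *ᵥ v))) (i : Fin n) :
    0 < v i := by
  have hempty : Nzero v = ∅ :=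
    hc.eq_empty_of_subset_nzero
      (fun j hj => (hM.mulVec_apply_eq_zero_of_apply_eq_zero hv (hMv j) hj).1)
      (fun j hj => (hM.mulVec_apply_eq_zero_of_apply_eq_zero hv (hMv j) hj).2)
  refine (hv i).lt_of_ne fun hvi => ?_
  exact (Set.eq_empty_iff_forall_notMem.mp hempty) i hvi.symm

/-- Maximum principle: if `y ≱ 0`, the minimum `m` of `y / v` is negative, and `z = y - m v ≥ 0`
vanishes on the set of minimisers, which is then closed under the edges of `M` and lies in
`N⁰(M v)`. -/
lemma IsZMatrix.nonneg_of_mulVec_nonneg (hM : IsZMatrix M) (hv : ∀ i, 0 ≤ v i)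
    (hMv : ∀ i, 0 ≤ (M *ᵥ v) i) (hc : Connects M (Nzero (M *ᵥ v)) (Npos (M *ᵥ v)))
    {y : Fin n → ℝ} (hMy : ∀ i, 0 ≤ (M *ᵥ y) i) (i : Fin n) : 0 ≤ y i := by
  have hvpos := hM.pos_of_connects hv hMv hc
  by_contra! hyi
  obtain ⟨i₀, -, hmin⟩ := exists_min_image univ (fun j => y j / v j) ⟨i, mem_univ i⟩
  set m := y i₀ / v i₀
  have hm : m < 0 := (hmin i (mem_univ i)).trans_lt (div_neg_of_neg_of_pos hyi (hvpos i))
  set z := y - m • v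
  have hz : ∀ j, 0 ≤ z j := fun j => by
    have := (le_div_iff₀ (hvpos j)).mp (hmin j (mem_univ j))
    simp only [z, Pi.sub_apply, Pi.smul_apply, smul_eq_mul]
    linarith
  have hMz : ∀ j, (M *ᵥ z) j = (M *ᵥ y) j - m * (M *ᵥ v) j := fun j => by
    simp [z, mulVec_sub, mulVec_smul]
  have hMz_nonneg : ∀ j, 0 ≤ (M *ᵥ z) j := fun j => by
    rw [hMz]; nlinarith [hMy j, hMv j]
  have hempty : Nzero z = ∅ := by
    refine hc.eq_empty_of_subset_nzero (fun j hj => ?_)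
      (fun j hj => (hM.mulVec_apply_eq_zero_of_apply_eq_zero hz (hMz_nonneg j) hj).2)
    have h0 := (hM.mulVec_apply_eq_zero_of_apply_eq_zero hz (hMz_nonneg j) hj).1
    rw [hMz] at h0
    show (M *ᵥ v) j = 0
    nlinarith [hMy j, hMv j]
  have hzi₀ : z i₀ = 0 := by
    simp [z, m, div_mul_cancel₀ _ (hvpos i₀).ne']
  exact (Set.eq_empty_iff_forall_notMem.mp hempty) i₀ hzi₀

/-- Monotonicity makes `M` injective, and the columns of `M⁻¹` solve `M y = eⱼ ≥ 0`. -/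
lemma IsZMatrix.isNonsingMMatrix_of_monotone (hM : IsZMatrix M)
    (hmono : ∀ y : Fin n → ℝ, (∀ i, 0 ≤ (M *ᵥ y) i) → ∀ i, 0 ≤ y i) : IsNonsingMMatrix M := by
  have hdet : IsUnit M.det := by
    refine isUnit_iff_ne_zero.mpr fun h => ?_
    obtain ⟨y, hy0, hMy⟩ := exists_mulVec_eq_zero_iff.mpr h
    have hpos := hmono y (by simp [hMy])
    have hneg := hmono (-y) (by simp [mulVec_neg, hMy])
    exact hy0 (funext fun i => le_antisymm (by simpa using hneg i) (hpos i))
  refine ⟨hM, hdet, fun i j => ?_⟩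
  have hcol := hmono (M⁻¹ *ᵥ Pi.single j 1) (fun k => by
    rw [mulVec_mulVec, mul_nonsing_inv M hdet, one_mulVec]
    by_cases hk : k = j <;> simp [hk]) i
  simpa [mulVec_single] using hcol

lemma IsZMatrix.isNonsingMMatrix_of_connects (hM : IsZMatrix M) (hv : ∀ i, 0 ≤ v i)
    (hMv : ∀ i, 0 ≤ (M *ᵥ v) i) (hc : Connects M (Nzero (M *ᵥ v)) (Npos (M *ᵥ v))) :
    IsNonsingMMatrix M :=
  hM.isNonsingMMatrix_of_monotone fun _ hMy => hM.nonneg_of_mulVec_nonneg hv hMv hc hMy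

end ZMatrix

section MMatrix

variable {M N : Matrix (Fin n) (Fin n) ℝ}

lemma IsNonsingMMatrix.isZMatrix (hM : IsNonsingMMatrix M) : IsZMatrix M :=
  hM.1

lemma IsNonsingMMatrix.diag_pos (hM : IsNonsingMMatrix M) (i : Fin n) : 0 < M i i := by
  obtain ⟨hZ, hdet, hinv⟩ := hM
  have hrow : ∑ k, M i k * M⁻¹ k i = 1 := by
    rw [← mul_apply, mul_nonsing_inv M hdet, one_apply_eq]
  have hoff : ∑ k ∈ univ.erase i, M i k * M⁻¹ k i ≤ 0 :=
    sum_nonpos fun k hk => mul_nonpos_of_nonpos_of_nonneg (hZ i k (ne_of_mem_erase hk).symm)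
      (hinv k i)
  rw [← add_sum_erase _ _ (mem_univ i)] at hrow
  by_contra! h
  nlinarith [mul_nonpos_of_nonpos_of_nonneg h (hinv i i)]

lemma IsNonsingMMatrix.isUnit_det_mul (hM : IsNonsingMMatrix M) (hN : IsNonsingMMatrix N) :
    IsUnit (M * N).det := by
  rw [det_mul]
  exact hM.2.1.mul hN.2.1

lemma IsNonsingMMatrix.inv_mul_nonneg (hM : IsNonsingMMatrix M) (hN : IsNonsingMMatrix N)
    (i j : Fin n) : 0 ≤ (M * N)⁻¹ i j := by
  rw [Matrix.mul_inv_rev]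
  exact mul_apply_nonneg hN.2.2 hM.2.2 i j

lemma IsNonsingMMatrix.inv_mulVec_pos_of_connects (hM : IsNonsingMMatrix M) {u : Fin n → ℝ}
    (hu : ∀ i, 0 ≤ u i) (hc : Connects M (Nzero u) (Npos u)) (i : Fin n) :
    0 < (M⁻¹ *ᵥ u) i := by
  have h := hM.isZMatrix.pos_of_connects (v := M⁻¹ *ᵥ u) (mulVec_apply_nonneg hM.2.2 hu)
  rw [mulVec_nonsing_inv_mulVec hM.2.1] at h
  exact h hu hc i

lemma IsNonsingMMatrix.nzero_inv_mulVec_subset (hM : IsNonsingMMatrix M) {u : Fin n → ℝ}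
    (hu : ∀ i, 0 ≤ u i) : Nzero (M⁻¹ *ᵥ u) ⊆ Nzero u := by
  intro i hi
  have h := hM.isZMatrix.mulVec_apply_eq_zero_of_apply_eq_zero (mulVec_apply_nonneg hM.2.2 hu)
    (by rw [mulVec_nonsing_inv_mulVec hM.2.1]; exact hu i) hi
  rw [mulVec_nonsing_inv_mulVec hM.2.1] at h
  exact h.1

lemma IsNonsingMMatrix.npos_subset_npos_inv_mulVec (hM : IsNonsingMMatrix M) {u : Fin n → ℝ}
    (hu : ∀ i, 0 ≤ u i) : Npos u ⊆ Npos (M⁻¹ *ᵥ u) := fun i hi =>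
  (mulVec_apply_nonneg hM.2.2 hu i).lt_of_ne fun h =>
    (ne_of_gt hi) (hM.nzero_inv_mulVec_subset hu h.symm)

lemma IsNonsingMMatrix.connects_inv_mul {A Az As : Matrix (Fin n) (Fin n) ℝ}
    (hM : IsNonsingMMatrix M) {e : Fin n → ℝ} (hAe : ∀ i, 0 ≤ (A *ᵥ e) i)
    (hAzM : ∀ i j, Az i j ≠ 0 → M i j ≠ 0) (hAsM : ∀ i j, As i j ≠ 0 → (M⁻¹ * A) i j ≠ 0)
    (hconn : Connects Az (Nzero (A *ᵥ e)) (Npos (A *ᵥ e)) ∨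
      Connects As (Nzero (A *ᵥ e)) (Npos (A *ᵥ e))) :
    Connects (M⁻¹ * A) (Nzero ((M⁻¹ * A) *ᵥ e)) (Npos ((M⁻¹ * A) *ᵥ e)) := by
  rw [← mulVec_mulVec]
  rcases hconn with hz | hs
  · have hpos := hM.inv_mulVec_pos_of_connects hAe (hz.mono hAzM subset_rfl subset_rfl)
    exact fun i hi => absurd hi (hpos i).ne'
  · exact hs.mono hAsM (hM.nzero_inv_mulVec_subset hAe) (hM.npos_subset_npos_inv_mulVec hAe)

end MMatrix

section LorenzSplitting

variable {A Az As : Matrix (Fin n) (Fin n) ℝ}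

lemma offDiagNeg_apply_self (A : Matrix (Fin n) (Fin n) ℝ) (i : Fin n) : offDiagNeg A i i = 0 := by
  simp [offDiagNeg, diagPart, offDiagPos]

lemma diagPart_add_offDiagPos_add_offDiagNeg (A : Matrix (Fin n) (Fin n) ℝ) :
    diagPart A + offDiagPos A + offDiagNeg A = A := by
  unfold offDiagNeg
  abel

lemma apply_self_eq_zero_of_offDiagNeg_eq_add (hdecomp : offDiagNeg A = Az + As)
    (hAz : ∀ i j, Az i j ≤ 0) (hAs : ∀ i j, As i j ≤ 0) (i : Fin n) :
    Az i i = 0 ∧ As i i = 0 := by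
  have h := congrFun (congrFun hdecomp i) i
  rw [offDiagNeg_apply_self, Matrix.add_apply] at h
  constructor <;> linarith [hAz i i, hAs i i]

lemma le_mul_diagonal_inv_mul {d : Fin n → ℝ} (hd : ∀ i, d i ≠ 0)
    (hdecomp : offDiagNeg A = Az + As) (hge : ∀ i j, diagPart A i j ≤ diagonal d i j)
    (h2 : ∀ i j, offDiagPos A i j ≤ (Az * diagonal d⁻¹ * As) i j) (i j : Fin n) :
    A i j ≤ ((diagonal d + Az) * (diagonal d⁻¹ * (diagonal d + As))) i j := by
  have hdd : diagonal d * diagonal d⁻¹ = 1 := by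
    rw [diagonal_mul_diagonal, ← diagonal_one]; simp [hd]
  have hdd' : diagonal d⁻¹ * diagonal d = 1 := by
    rw [diagonal_mul_diagonal, ← diagonal_one]; simp [hd]
  have hexpand : (diagonal d + Az) * (diagonal d⁻¹ * (diagonal d + As)) =
      diagonal d + Az + As + Az * diagonal d⁻¹ * As := by
    rw [Matrix.mul_add (diagonal d⁻¹), hdd', Matrix.mul_add, Matrix.mul_one, Matrix.add_mul,
      ← Matrix.mul_assoc (diagonal d), hdd, Matrix.one_mul, Matrix.mul_assoc Az]
    abel
  rw [hexpand, ← diagPart_add_offDiagPos_add_offDiagNeg A, hdecomp]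
  simp only [Matrix.add_apply]
  linarith [hge i j, h2 i j]

end LorenzSplitting

theorem relaxed_lorenz_condition_general
    {n : ℕ} (A Az As Ads : Matrix (Fin n) (Fin n) ℝ)
    (hdecomp : offDiagNeg A = Az + As)
    (hAz : ∀ i j, Az i j ≤ 0) (hAs : ∀ i j, As i j ≤ 0)
    (hdiag : ∀ i j, i ≠ j → Ads i j = 0)
    (hge : ∀ i j, diagPart A i j ≤ Ads i j)
    (h1 : IsNonsingMMatrix (Ads + Az))
    (h2 : ∀ i j, offDiagPos A i j ≤ (Az * Ads⁻¹ * As) i j)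
    (e : Fin n → ℝ) (he : ∀ i, 0 ≤ e i)
    (hAe : ∀ i, 0 ≤ A.mulVec e i)
    (hconn : Connects Az (Nzero (A.mulVec e)) (Npos (A.mulVec e)) ∨
      Connects As (Nzero (A.mulVec e)) (Npos (A.mulVec e))) :
    (∃ M1 M2 : Matrix (Fin n) (Fin n) ℝ,
      IsNonsingMMatrix M1 ∧ IsNonsingMMatrix M2 ∧ A = M1 * M2) ∧
      IsUnit A.det ∧ ∀ i j, 0 ≤ A⁻¹ i j := by
  have hdiag0 := apply_self_eq_zero_of_offDiagNeg_eq_add hdecomp hAz hAs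
  obtain ⟨d, hd, rfl⟩ : ∃ d : Fin n → ℝ, (∀ i, 0 < d i) ∧ Ads = diagonal d :=
    ⟨fun i => Ads i i, fun i => by simpa [(hdiag0 i).1] using h1.diag_pos i, by
      ext i j; rcases eq_or_ne i j with rfl | hij <;> simp [*]⟩
  rw [inv_diagonal_of_ne_zero fun i => (hd i).ne'] at h2
  have hle := le_mul_diagonal_inv_mul (fun i => (hd i).ne') hdecomp hge h2
  generalize hB : diagonal d + Az = B at h1 hle
  have hMle : ∀ i j, i ≠ j → (B⁻¹ * A) i j ≤ (d i)⁻¹ * As i j := fun i j hij =>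
    (inv_mul_apply_le_of_le_mul h1.2.1 h1.2.2 hle i j).trans_eq (by simp [diagonal_mul, hij])
  have hMZ : IsZMatrix (B⁻¹ * A) := fun i j hij =>
    (hMle i j hij).trans (mul_nonpos_of_nonneg_of_nonpos (inv_nonneg.2 (hd i).le) (hAs i j))
  have hAsM : ∀ i j, As i j ≠ 0 → (B⁻¹ * A) i j ≠ 0 := fun i j hij =>
    have hij' : i ≠ j := by rintro rfl; exact hij (hdiag0 i).2
    ((hMle i j hij').trans_lt
      (mul_neg_of_pos_of_neg (inv_pos.2 (hd i)) ((hAs i j).lt_of_ne hij))).ne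
  have hM : IsNonsingMMatrix (B⁻¹ * A) :=
    hMZ.isNonsingMMatrix_of_connects he
      (by rw [← mulVec_mulVec]; exact mulVec_apply_nonneg h1.2.2 hAe)
      (h1.connects_inv_mul hAe (fun i j => hB ▸ diagonal_add_apply_ne_zero (fun i => (hdiag0 i).1))
        hAsM hconn)
  have hA : A = B * (B⁻¹ * A) := by
    rw [← Matrix.mul_assoc, mul_nonsing_inv B h1.2.1, Matrix.one_mul]
  refine ⟨⟨B, B⁻¹ * A, h1, hM, hA⟩, ?_, ?_⟩ <;> rw [hA]
  exacts [h1.isUnit_det_mul hM, h1.inv_mul_nonneg hM]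

theorem relaxed_lorenz_condition
    {n : ℕ} (A Az As Ads : Matrix (Fin n) (Fin n) ℝ)
    (hdecomp : offDiagNeg A = Az + As)
    (hAz : ∀ i j, Az i j ≤ 0) (hAs : ∀ i j, As i j ≤ 0)
    (hdiag : ∀ i j, i ≠ j → Ads i j = 0)
    (hge : ∀ i j, diagPart A i j ≤ Ads i j)
    (h1 : IsNonsingMMatrix (Ads + Az))
    (h2 : ∀ i j, offDiagPos A i j ≤ (Az * Ads⁻¹ * As) i j)
    (e : Fin n → ℝ) (he0 : e ≠ 0) (he : ∀ i, 0 ≤ e i)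
    (hAe : ∀ i, 0 ≤ A.mulVec e i)
    (hconn : Connects Az (Nzero (A.mulVec e)) (Npos (A.mulVec e)) ∨
      Connects As (Nzero (A.mulVec e)) (Npos (A.mulVec e))) :
    (∃ M1 M2 : Matrix (Fin n) (Fin n) ℝ,
      IsNonsingMMatrix M1 ∧ IsNonsingMMatrix M2 ∧ A = M1 * M2) ∧
      IsUnit A.det ∧ ∀ i j, 0 ≤ A⁻¹ i j :=
  relaxed_lorenz_condition_general A Az As Ads hdecomp hAz hAs hdiag hge h1 h2 e he hAe hconn
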